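/- Let X be an irreducible recurrent Markov chain with transition probabilities p, let A ⊂ S, x ∈ S, and y ∈ A. Then P^x(X_{τ⁺_A} = y) = p(x,y) + Σ_{z ∈ S∖A} [P^x(τ⁺_z < τ⁺_A) / P^z(τ⁺_A < τ⁺_z)] · p(z,y). -/

import Mathlib

open MeasureTheory Filter Set Topology
open scoped ENNReal

/-- A discrete-time Markov chain: a transition matrix `p` together with the family
of path measures `P x` (chain started at `x`), characterized on cylinder sets. -/
structure MC (S : Type*) [MeasurableSpace S] where
  p : S → S → ℝ≥0∞
  rowSum : ∀ x, ∑' y, p x y = 1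
  P : S → Measure (ℕ → S)
  prob : ∀ x, IsProbabilityMeasure (P x)
  start : ∀ x, P x {ω | ω 0 = x} = 1
  cyl : ∀ (γ : ℕ → S) (n : ℕ),
    P (γ 0) {ω | ∀ i ≤ n + 1, ω i = γ i}
      = P (γ 0) {ω | ∀ i ≤ n, ω i = γ i} * p (γ n) (γ (n + 1))

variable {S : Type*} [MeasurableSpace S]

/-- Return time `τ⁺_A = inf {n > 0 : X_n ∈ A}`, with value `⊤` if the set is never hit. -/
noncomputable def tauP (A : Set S) (ω : ℕ → S) : ℕ∞ :=
  sInf ((fun k : ℕ => (k : ℕ∞)) '' {k | 0 < k ∧ ω k ∈ A})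

/-- Hitting time `τ_A = inf {n ≥ 0 : X_n ∈ A}`. -/
noncomputable def tau (A : Set S) (ω : ℕ → S) : ℕ∞ :=
  sInf ((fun k : ℕ => (k : ℕ∞)) '' {k | ω k ∈ A})

/-- The event `X_{τ⁺_A} = y`. -/
def hitAtP (A : Set S) (y : S) : Set (ℕ → S) :=
  {ω | ∃ k : ℕ, tauP A ω = (k : ℕ∞) ∧ ω k = y}

/-- The event `X_{τ_A} = y`. -/
def hitAt (A : Set S) (y : S) : Set (ℕ → S) :=
  {ω | ∃ k : ℕ, tau A ω = (k : ℕ∞) ∧ ω k = y}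

def MCIrreducible (M : MC S) : Prop := ∀ x y : S, ∃ n : ℕ, 0 < M.P x {ω | ω n = y}

def MCRecurrent (M : MC S) : Prop := ∀ x : S, M.P x {ω | tauP {x} ω ≠ ⊤} = 1

/-- `E^z[τ⁺_x]`, the expected return time to `x` starting from `z`. -/
noncomputable def retExp (M : MC S) (z x : S) : ℝ≥0∞ :=
  ∫⁻ ω, ((tauP {x} ω : ℕ∞) : ℝ≥0∞) ∂ M.P z

def MCPositiveRecurrent (M : MC S) : Prop := ∀ x : S, retExp M x x < ⊤

def MCStationary (M : MC S) (μ : S → ℝ≥0∞) : Prop :=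
  (∑' x, μ x = 1) ∧ ∀ y, ∑' x, μ x * M.p x y = μ y

/-!
Cutting a path at its first entrance into `A` gives `P^x(X_{τ⁺_A} = y) = G(x, y)`, where
`G(w, c) = ∑_{n ≥ 0} P^w(X_1, …, X_n ∉ A, X_{n+1} = c)` is the Green function of the chain killed
on entering `A`; cutting once more before the last step,
`G(x, y) = p(x, y) + ∑_{z ∉ A} G(x, z) p(z, y)`. For `z ∉ A`, cutting at the first visit to `z`
gives `G(x, z) = P^x(τ⁺_z < τ⁺_A) (1 + G(z, z))` and `G(z, z) = r (1 + G(z, z))` with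
`r = P^z(τ⁺_z < τ⁺_A)`. By recurrence `r + P^z(τ⁺_A < τ⁺_z) = 1`, and `G(z, z) < ⊤` when `r < 1`,
so `1 + G(z, z) = P^z(τ⁺_A < τ⁺_z)⁻¹` in `ℝ≥0∞` (both sides are `⊤` when `r = 1`).

`MC` fixes the path measures only on cylinders, over an arbitrary σ-algebra on `S`. Recurrence
forces this σ-algebra to separate points: if no measurable set tells `x ≠ y` apart, every
measurable set of paths is invariant under replacing `x` by `y` at a fixed time, which forces
`p(z, x) = 0` for every `z`, and then the chain cannot return to `x`. So for countable `S` every set of states is measurable, and the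
Markov property can be read off the cylinder formula.
-/

namespace ENNReal

open Finset

lemma tsum_subtype_eq_tsum_diff_singleton_add {α : Type*} {J : Set α} {z : α} (hz : z ∈ J)
    (f : α → ℝ≥0∞) : ∑' b : J, f b = ∑' b : ↥(J \ {z}), f b + f z := by
  conv_lhs => rw [← sdiff_union_of_subset (singleton_subset_iff.2 hz)]
  rw [ENNReal.summable.tsum_union_disjoint disjoint_sdiff_left ENNReal.summable, tsum_singleton]

theorem tsum_mul_tsum_eq_tsum_sum_antidiagonal (f g : ℕ → ℝ≥0∞) :
    (∑' n, f n) * ∑' n, g n = ∑' n, ∑ ij ∈ antidiagonal n, f ij.1 * g ij.2 := by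
  simp_rw [← ENNReal.tsum_mul_right, ← ENNReal.tsum_mul_left]
  rw [← ENNReal.tsum_prod' (f := fun p : ℕ × ℕ => f p.1 * g p.2),
    ← HasAntidiagonal.sigmaAntidiagonalEquivProd.tsum_eq, ENNReal.tsum_sigma']
  exact tsum_congr fun n => Finset.tsum_subtype (antidiagonal n) fun ij => f ij.1 * g ij.2

theorem tsum_eq_mul_one_add_of_renewal {a b d : ℕ → ℝ≥0∞} (h0 : b 0 = a 0)
    (hs : ∀ n, b (n + 1) = a (n + 1) + ∑ ij ∈ antidiagonal n, a ij.1 * d ij.2) :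
    ∑' n, b n = (∑' n, a n) * (1 + ∑' n, d n) := by
  rw [mul_add, mul_one, tsum_mul_tsum_eq_tsum_sum_antidiagonal, tsum_eq_zero_add' ENNReal.summable,
    tsum_eq_zero_add' ENNReal.summable (f := a), h0, add_assoc, ← ENNReal.tsum_add]
  simp_rw [hs]

theorem tsum_ne_top_of_renewal {a b : ℕ → ℝ≥0∞} (h0 : b 0 = a 0)
    (hs : ∀ n, b (n + 1) = a (n + 1) + ∑ ij ∈ antidiagonal n, a ij.1 * b ij.2)
    (ha : ∑' n, a n < 1) : ∑' n, b n ≠ ⊤ := by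
  set r := ∑' n, a n
  set K := (1 - r)⁻¹
  have hK : 1 + r * K = K := calc
    1 + r * K = (1 - r) * K + r * K := by
      rw [ENNReal.mul_inv_cancel (tsub_pos_of_lt ha).ne' (ENNReal.sub_ne_top one_ne_top)]
    _ = K := by rw [← add_mul, tsub_add_cancel_of_le ha.le, one_mul]
  have hK_top : r * K ≠ ⊤ :=
    ENNReal.mul_ne_top ha.ne_top (ENNReal.inv_ne_top.2 (tsub_pos_of_lt ha).ne')
  -- the partial sums `B N = ∑_{n < N} b n` satisfy `B (N + 1) ≤ r + r * B N`, and `r * K` is a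
  -- fixed point of `t ↦ r + r * t`
  have hB : ∀ N, ∑ n ∈ Finset.range N, b n ≤ r * K := by
    intro N
    induction N with
    | zero => simp
    | succ N ih =>
      have hconv : ∑ n ∈ Finset.range N, ∑ ij ∈ antidiagonal n, a ij.1 * b ij.2 ≤ r * (r * K) := by
        calc ∑ n ∈ Finset.range N, ∑ ij ∈ antidiagonal n, a ij.1 * b ij.2
            = ∑ n ∈ Finset.range N, ∑ k ∈ Finset.range (n + 1), a k * b (n - k) :=
              Finset.sum_congr rfl fun n _ =>
                Finset.Nat.sum_antidiagonal_eq_sum_range_succ (fun i j => a i * b j) n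
          _ = ∑ m ∈ Finset.range N, ∑ k ∈ Finset.range (N - m), a m * b k :=
              Finset.sum_range_diag_flip N fun i j => a i * b j
          _ ≤ ∑ m ∈ Finset.range N, a m * (r * K) := by
              refine Finset.sum_le_sum fun m _ => ?_
              rw [← Finset.mul_sum]
              exact mul_le_mul_right ((Finset.sum_le_sum_of_subset
                (Finset.range_subset_range.2 (Nat.sub_le N m))).trans ih) _
          _ ≤ r * (r * K) := by
              rw [← Finset.sum_mul]
              exact mul_le_mul_left (ENNReal.sum_le_tsum _) _
      calc ∑ n ∈ Finset.range (N + 1), b n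
          = ∑ n ∈ Finset.range (N + 1), a n
            + ∑ n ∈ Finset.range N, ∑ ij ∈ antidiagonal n, a ij.1 * b ij.2 := by
            rw [Finset.sum_range_succ', Finset.sum_range_succ', h0]
            simp_rw [hs, Finset.sum_add_distrib]
            ring
        _ ≤ r + r * (r * K) := add_le_add (ENNReal.sum_le_tsum _) hconv
        _ = r * (1 + r * K) := by rw [mul_add, mul_one]
        _ = r * K := by rw [hK]
  refine ne_top_of_le_ne_top hK_top ?_
  rw [ENNReal.tsum_eq_iSup_nat]
  exact iSup_le hB

theorem one_add_eq_inv_of_eq_mul {r v T : ℝ≥0∞} (hrv : r + v = 1) (hT : T = r * (1 + T))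
    (hfin : r < 1 → T ≠ ⊤) : 1 + T = v⁻¹ := by
  rcases (hrv ▸ le_self_add : r ≤ 1).lt_or_eq with hr | rfl
  · refine ENNReal.eq_inv_of_mul_eq_one_left ?_
    have hT' := hfin hr
    rw [← ENNReal.add_sub_cancel_left hr.ne_top (b := v), hrv,
      ENNReal.mul_sub fun _ _ => ENNReal.add_ne_top.2 ⟨one_ne_top, hT'⟩, mul_one, mul_comm, ← hT]
    exact ENNReal.add_sub_cancel_right hT'
  · have hv : v = 0 := by simpa using hrv
    have hT_top : T = ⊤ := by
      by_contra hT'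
      rw [one_mul] at hT
      exact (ENNReal.lt_add_right hT' one_ne_zero).ne (hT.trans (add_comm _ _))
    simp [hv, hT_top]

end ENNReal

lemma _root_.MeasureTheory.preimage_subset_toMeasurable {α : Type*} [MeasurableSpace α]
    {f : α → α} (hf : ∀ F, MeasurableSet F → f ⁻¹' F = F) (μ : Measure α) (E : Set α) :
    f ⁻¹' E ⊆ toMeasurable μ E := by
  rw [← hf _ (measurableSet_toMeasurable μ E)]
  exact preimage_mono (subset_toMeasurable μ E)

lemma _root_.MeasureTheory.measure_eq_tsum_inter_preimage_singleton {α β : Type*}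
    [MeasurableSpace α] [MeasurableSpace β] [Countable β] [MeasurableSingletonClass β]
    (μ : Measure α) {f : α → β} (hf : Measurable f) (F : Set α) :
    μ F = ∑' b, μ (F ∩ f ⁻¹' {b}) := by
  have h := tsum_measure_preimage_singleton (μ := μ.restrict F) countable_univ
    (fun b _ => hf (measurableSet_singleton b))
  rw [preimage_univ, Measure.restrict_apply_univ,
    tsum_univ (f := fun b => μ.restrict F (f ⁻¹' {b}))] at h
  rw [← h]
  exact tsum_congr fun b => by
    rw [Measure.restrict_apply (hf (measurableSet_singleton b)), inter_comm]

lemma tauP_eq_top_iff {α : Type*} {A : Set α} {ω : ℕ → α} :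
    tauP A ω = ⊤ ↔ ∀ k, 0 < k → ω k ∉ A := by
  simp only [tauP, sInf_eq_top, forall_mem_image, ENat.natCast_ne_top, imp_false, mem_ofPred_eq,
    not_and]

lemma tauP_lt_iff {α : Type*} {A : Set α} {ω : ℕ → α} {m : ℕ∞} :
    tauP A ω < m ↔ ∃ j, 0 < j ∧ ω j ∈ A ∧ (j : ℕ∞) < m := by
  simp [tauP, sInf_lt_iff, and_assoc]

lemma tauP_eq_coe_iff {α : Type*} {A : Set α} {ω : ℕ → α} {k : ℕ} :
    tauP A ω = k ↔ 0 < k ∧ ω k ∈ A ∧ ∀ j, 0 < j → j < k → ω j ∉ A := by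
  rw [le_antisymm_iff, ← ENat.lt_add_one_iff (ENat.natCast_ne_top k), ← not_lt, ← Nat.cast_succ,
    tauP_lt_iff, tauP_lt_iff]
  simp only [Nat.cast_lt, not_exists, not_and]
  constructor
  · rintro ⟨⟨j, hj, hjA, hjk⟩, hmin⟩
    obtain rfl : j = k := by have := hmin j hj hjA; omega
    exact ⟨hj, hjA, fun i hi hik hiA => hmin i hi hiA hik⟩
  · rintro ⟨hk, hkA, hmin⟩
    exact ⟨⟨k, hk, hkA, k.lt_succ_self⟩, fun j hj hjA hjk => hmin j hj hjk hjA⟩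

lemma coe_lt_tauP_iff {α : Type*} {A : Set α} {ω : ℕ → α} {k : ℕ} :
    (k : ℕ∞) < tauP A ω ↔ ∀ j, 0 < j → j ≤ k → ω j ∉ A := by
  rw [← not_le, ← ENat.lt_add_one_iff (ENat.natCast_ne_top k), ← Nat.cast_succ, tauP_lt_iff]
  simp only [Nat.cast_lt, Nat.lt_succ_iff, not_exists, not_and]
  exact forall₂_congr fun j _ => imp_not_comm

def staysIn (Q : Set S) (n : ℕ) : Set (ℕ → S) := {ω | ∀ j, 0 < j → j ≤ n → ω j ∈ Q}

lemma hitAtP_eq_iUnion {α : Type*} {A : Set α} {y : α} (hy : y ∈ A) :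
    hitAtP A y = ⋃ n, staysIn Aᶜ n ∩ {ω | ω (n + 1) = y} := by
  ext ω
  simp only [hitAtP, tauP_eq_coe_iff, mem_iUnion, mem_inter_iff, staysIn, mem_ofPred_eq]
  constructor
  · rintro ⟨k, ⟨hk, -, hmin⟩, rfl⟩
    obtain ⟨n, rfl⟩ := Nat.exists_eq_add_one_of_ne_zero hk.ne'
    exact ⟨n, fun j hj hjn => hmin j hj (by omega), rfl⟩
  · rintro ⟨n, hn, rfl⟩
    exact ⟨n + 1, ⟨n.succ_pos, hy, fun j hj hjn => hn j hj (by omega)⟩, rfl⟩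

lemma setOf_tauP_lt_tauP_eq_iUnion {α : Type*} {B C : Set α} :
    {ω | tauP B ω < tauP C ω} = ⋃ n, staysIn (B ∪ C)ᶜ n ∩ {ω | ω (n + 1) ∈ B \ C} := by
  ext ω
  simp only [mem_ofPred_eq, mem_iUnion, mem_inter_iff, staysIn, mem_compl_iff, mem_union,
    not_or, Set.mem_sdiff]
  constructor
  · intro h
    obtain ⟨k, hk⟩ := ENat.ne_top_iff_exists.1 h.ne_top
    obtain ⟨hk0, hkB, hmin⟩ := tauP_eq_coe_iff.1 hk.symm
    have hC := coe_lt_tauP_iff.1 (hk ▸ h)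
    obtain ⟨n, rfl⟩ := Nat.exists_eq_add_one_of_ne_zero hk0.ne'
    exact ⟨n, fun j hj hjn => ⟨hmin j hj (by omega), hC j hj (by omega)⟩, hkB, hC _ hk0 le_rfl⟩
  · rintro ⟨n, hn, hB, hC⟩
    rw [tauP_eq_coe_iff.2 ⟨n.succ_pos, hB, fun j hj hjn => (hn j hj (by omega)).1⟩]
    refine coe_lt_tauP_iff.2 fun j hj hjn => ?_
    rcases Nat.of_le_succ hjn with hjn | rfl
    exacts [(hn j hj hjn).2, hC]

def agreeUpTo (n : ℕ) (ω : ℕ → S) : Set (ℕ → S) := {ω' | ∀ i ≤ n, ω' i = ω i}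

lemma agreeUpTo_eq_preimage {α : Type*} (n : ℕ) (ω : ℕ → α) :
    agreeUpTo n ω = Preorder.frestrictLe (π := fun _ => α) n ⁻¹' {Preorder.frestrictLe n ω} := by
  ext ω'
  simp [agreeUpTo, funext_iff]

lemma measure_eq_zero_of_forall_agreeUpTo [Countable S] {μ : Measure (ℕ → S)}
    {D : Set (ℕ → S)} (n : ℕ) (h : ∀ ω ∈ D, μ (agreeUpTo n ω) = 0) : μ D = 0 := by
  set ρ := Preorder.frestrictLe (π := fun _ : ℕ => S) n
  have hD : D ⊆ ⋃ γ ∈ ρ '' D, ρ ⁻¹' {γ} := fun ω hω => mem_biUnion (mem_image_of_mem ρ hω) rfl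
  refine measure_mono_null hD ((measure_biUnion_null_iff (to_countable _)).2 ?_)
  rintro _ ⟨ω, hω, rfl⟩
  rw [← agreeUpTo_eq_preimage]
  exact h ω hω

open scoped Classical in
noncomputable def moveAt (i : ℕ) (x y : S) (ω : ℕ → S) : ℕ → S :=
  fun j => if j = i ∧ ω j = x then y else ω j

lemma preimage_moveAt {x y : S} (hxy : ∀ B, MeasurableSet B → x ∈ B → y ∈ B) (i : ℕ)
    {F : Set (ℕ → S)} (hF : MeasurableSet F) : moveAt i x y ⁻¹' F = F := by
  have hle : (MeasurableSpace.pi : MeasurableSpace (ℕ → S)) ≤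
      MeasurableSpace.invariants (moveAt i x y) :=
    iSup_le fun j => MeasurableSpace.comap_le_iff_le_map.2 fun B hB =>
      ⟨measurable_pi_apply j hB, by
        ext ω
        simp only [mem_preimage, moveAt]
        split_ifs with h
        · rw [h.2]
          exact ⟨fun hy => by_contra fun hx => hxy _ hB.compl hx hy, hxy B hB⟩
        · rfl⟩
  exact (hle F hF).2

namespace MC

open Finset.HasAntidiagonal

/-- `P^w(X_1, …, X_n ∈ Q, X_{n+1} = c)`: the `n + 1`-step transition probability from `w`
to `c` with taboo set `Qᶜ`. -/
noncomputable def tabooProb (M : MC S) (Q : Set S) (n : ℕ) (w c : S) : ℝ≥0∞ :=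
  M.P w (staysIn Q n ∩ {ω | ω (n + 1) = c})

noncomputable def tabooGreen (M : MC S) (Q : Set S) (w c : S) : ℝ≥0∞ :=
  ∑' n, M.tabooProb Q n w c

section Discreteness

variable (M : MC S)

lemma measure_step (z w : S) : M.P z {ω | ω 0 = z ∧ ω 1 = w} = M.p z w := by
  have h := M.cyl (fun i => if i = 0 then z else w) 0
  have h1 : {ω : ℕ → S | ∀ i ≤ 0 + 1, ω i = if i = 0 then z else w}
      = {ω | ω 0 = z ∧ ω 1 = w} := by
    ext ω
    simp [Nat.le_one_iff_eq_zero_or_eq_one, or_imp, forall_and]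
  have h0 : {ω : ℕ → S | ∀ i ≤ 0, ω i = if i = 0 then z else w} = {ω | ω 0 = z} := by
    ext ω
    simp
  simpa [h1, h0, M.start] using h

lemma measure_coord_zero_mem_eq_zero {x : S} {B : Set S} (hB : MeasurableSet B) (hx : x ∉ B) :
    M.P x {ω | ω 0 ∈ B} = 0 := by
  have := M.prob x
  refine (prob_compl_eq_one_iff (measurable_pi_apply 0 hB)).1 (le_antisymm prob_le_one ?_)
  exact (M.start x).symm.le.trans (measure_mono fun ω (hω : ω 0 = x) => by simp [hω, hx])

lemma p_eq_zero_of_inseparable [Countable S] {x y : S} (hne : x ≠ y)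
    (hxy : ∀ B, MeasurableSet B → x ∈ B → y ∈ B) (z : S) : M.p z x = 0 := by
  set μ := M.P z
  set C : S → Set (ℕ → S) := fun w => {ω | ω 0 = z ∧ ω 1 = w}
  -- the measurable hull of `C y` also contains the paths through `x` at time `1`
  have hcover : {ω : ℕ → S | ω 0 = z} ⊆ ⋃ w : ↥({x}ᶜ : Set S), toMeasurable μ (C w) := by
    intro ω (hω : ω 0 = z)
    by_cases h1 : ω 1 = x
    · refine mem_iUnion.2 ⟨⟨y, hne.symm⟩, preimage_subset_toMeasurable
        (fun F hF => preimage_moveAt hxy 1 hF) μ _ ?_⟩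
      simp [C, moveAt, hω, h1]
    · exact mem_iUnion.2 ⟨⟨ω 1, h1⟩, subset_toMeasurable μ _ ⟨hω, rfl⟩⟩
  have hle : 1 ≤ ∑' w : ↥({x}ᶜ : Set S), M.p z w := calc
    1 = μ {ω | ω 0 = z} := (M.start z).symm
    _ ≤ ∑' w : ↥({x}ᶜ : Set S), μ (toMeasurable μ (C w)) :=
      (measure_mono hcover).trans (measure_iUnion_le _)
    _ = _ := by simp only [measure_toMeasurable, C, μ, M.measure_step]
  have hsum : M.p z x + ∑' w : ↥({x}ᶜ : Set S), M.p z w = 1 := by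
    rw [← M.rowSum z, ← ENNReal.summable.tsum_add_tsum_compl (s := {x}) ENNReal.summable,
      tsum_singleton]
  have hfin : ∑' w : ↥({x}ᶜ : Set S), M.p z w ≠ ⊤ :=
    ne_top_of_le_ne_top ENNReal.one_ne_top (hsum ▸ le_add_self)
  refine le_zero_iff.1 ((ENNReal.add_le_add_iff_right hfin).1 ?_)
  rw [hsum, zero_add]
  exact hle

lemma measure_agreeUpTo_eq_zero [Countable S] {x y : S} (hne : x ≠ y)
    (hxy : ∀ B, MeasurableSet B → x ∈ B → y ∈ B) {k : ℕ} {ω : ℕ → S} (hω : ω (k + 1) = x) :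
    M.P x (agreeUpTo (k + 1) ω) = 0 := by
  have hstart : ∀ ω : ℕ → S, ω 0 = x → ω (k + 1) = x → M.P x (agreeUpTo (k + 1) ω) = 0 := by
    intro ω h0 hk
    have h := M.cyl ω k
    rw [h0] at h
    rw [agreeUpTo, h, hk, M.p_eq_zero_of_inseparable hne hxy, mul_zero]
  by_cases h0 : ω 0 = x
  · exact hstart ω h0 hω
  by_cases hw : ∀ B, MeasurableSet B → ω 0 ∈ B → x ∈ B
  · -- move the starting point from `ω 0` to `x`, which no measurable set can detect
    set ω' := moveAt 0 (ω 0) x ω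
    have hsub : agreeUpTo (k + 1) ω ⊆ moveAt 0 (ω 0) x ⁻¹' agreeUpTo (k + 1) ω' :=
      fun ω'' h i hi => by simp only [ω', moveAt]; rw [h i hi]
    refine measure_mono_null (hsub.trans (preimage_subset_toMeasurable
      (fun F hF => preimage_moveAt hw 0 hF) (M.P x) _)) ?_
    rw [measure_toMeasurable]
    exact hstart ω' (by simp [ω', moveAt]) (by simp [ω', moveAt, hω])
  · push Not at hw
    obtain ⟨B, hB, hwB, hxB⟩ := hw
    exact measure_mono_null (fun ω'' h => by simp [h 0 (Nat.zero_le _), hwB])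
      (M.measure_coord_zero_mem_eq_zero hB hxB)

theorem separatesPoints_of_recurrent [Countable S] (hrec : MCRecurrent M) :
    MeasurableSpace.SeparatesPoints S := by
  refine ⟨fun x y hxy => by_contra fun hne => ?_⟩
  have hnull : M.P x {ω | tauP {x} ω ≠ ⊤} = 0 := by
    refine measure_mono_null (fun ω hω => ?_) (measure_iUnion_null fun k =>
      measure_eq_zero_of_forall_agreeUpTo (D := {ω | ω (k + 1) = x}) (k + 1) fun ω hω =>
        M.measure_agreeUpTo_eq_zero hne hxy hω)
    obtain ⟨k, hk, hkx⟩ : ∃ k, 0 < k ∧ ω k = x := by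
      simpa [tauP_eq_top_iff] using hω
    obtain ⟨k, rfl⟩ := Nat.exists_eq_add_of_lt hk
    exact mem_iUnion.2 ⟨k, by simpa using hkx⟩
  simp [hrec x] at hnull

end Discreteness

section MarkovProperty

variable (M : MC S) [MeasurableSingletonClass S]

lemma measure_start_ne (w : S) : M.P w {ω | ω 0 ≠ w} = 0 := by
  have := M.prob w
  exact (prob_compl_eq_zero_iff ((measurableSet_singleton w).preimage (measurable_pi_apply 0))).2
    (M.start w)

theorem measure_agreeUpTo_inter_coord_succ (w : S) (ω : ℕ → S) (n : ℕ) (c : S) :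
    M.P w (agreeUpTo n ω ∩ {ω' | ω' (n + 1) = c}) = M.P w (agreeUpTo n ω) * M.p (ω n) c := by
  set ω₁ := Function.update ω (n + 1) c
  have hlow : ∀ i ≤ n, ω₁ i = ω i := fun i hi => Function.update_of_ne (by omega) _ _
  have h₁ : agreeUpTo n ω ∩ {ω' | ω' (n + 1) = c} = agreeUpTo (n + 1) ω₁ := by
    ext ω'
    constructor
    · rintro ⟨h, hc⟩ i hi
      rcases Nat.of_le_succ hi with hi | rfl
      · rw [h i hi, hlow i hi]
      · simpa [ω₁] using hc
    · intro h
      exact ⟨fun i hi => (h i (by omega)).trans (hlow i hi),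
        (h (n + 1) le_rfl).trans (by simp [ω₁])⟩
  have h₀ : agreeUpTo n ω = agreeUpTo n ω₁ :=
    Set.ext fun ω' => forall₂_congr fun i hi => by rw [hlow i hi]
  rw [h₁, h₀, ← hlow n le_rfl, show c = ω₁ (n + 1) by simp [ω₁]]
  rcases eq_or_ne (ω₁ 0) w with rfl | h
  · exact M.cyl ω₁ n
  · have hnull : ∀ m, M.P w (agreeUpTo m ω₁) = 0 := fun m =>
      measure_mono_null (fun ω' h' => (h' 0 (Nat.zero_le _)).trans_ne h) (M.measure_start_ne w)
    rw [hnull, hnull, zero_mul]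

lemma tabooProb_zero (Q : Set S) (w c : S) : M.tabooProb Q 0 w c = M.p w c := by
  have h : staysIn Q 0 ∩ {ω | ω (0 + 1) = c} ∩ {ω | ω 0 = w} = {ω | ω 0 = w ∧ ω 1 = c} :=
    Set.ext fun ω => ⟨fun h => ⟨h.2, h.1.2⟩, fun h => ⟨⟨fun j hj hj0 => by omega, h.2⟩, h.1⟩⟩
  rw [tabooProb, ← measure_inter_conull (t := {ω | ω 0 = w}) (M.measure_start_ne w), h,
    M.measure_step]

variable [Countable S]

theorem measure_inter_coord_succ_eq_mul {n : ℕ} {b : S} {E : Set (ℕ → S)}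
    (hEn : ∀ ω ∈ E, agreeUpTo n ω ⊆ E) (hb : ∀ ω ∈ E, ω n = b) (w c : S) :
    M.P w (E ∩ {ω | ω (n + 1) = c}) = M.P w E * M.p b c := by
  set ρ := Preorder.frestrictLe (π := fun _ : ℕ => S) n
  have hρ : Measurable ρ := Preorder.measurable_frestrictLe n
  rw [measure_eq_tsum_inter_preimage_singleton _ hρ, measure_eq_tsum_inter_preimage_singleton _ hρ,
    ← ENNReal.tsum_mul_right]
  refine tsum_congr fun γ => ?_
  rcases (E ∩ ρ ⁻¹' {γ}).eq_empty_or_nonempty with h | ⟨ω, hωE, hωγ⟩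
  · rw [inter_right_comm, h, empty_inter, measure_empty, zero_mul]
  · have hfib : E ∩ ρ ⁻¹' {γ} = agreeUpTo n ω := by
      rw [agreeUpTo_eq_preimage, ← show ρ ω = γ from hωγ]
      exact inter_eq_right.2 (agreeUpTo_eq_preimage n ω ▸ hEn ω hωE)
    rw [inter_right_comm, hfib, M.measure_agreeUpTo_inter_coord_succ, hb ω hωE]

lemma tabooProb_succ (Q : Set S) (n : ℕ) (w c : S) :
    M.tabooProb Q (n + 1) w c = ∑' b : Q, M.tabooProb Q n w b * M.p b c := by
  rw [tsum_subtype Q fun b => M.tabooProb Q n w b * M.p b c, tabooProb,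
    measure_eq_tsum_inter_preimage_singleton _ (measurable_pi_apply (n + 1))]
  refine tsum_congr fun b => ?_
  set E := staysIn Q (n + 1) ∩ {ω | ω (n + 1) = b}
  have hE : staysIn Q (n + 1) ∩ {ω | ω (n + 1 + 1) = c} ∩ (fun ω => ω (n + 1)) ⁻¹' {b}
      = E ∩ {ω | ω (n + 1 + 1) = c} := inter_right_comm _ _ _
  have hEn : ∀ ω ∈ E, agreeUpTo (n + 1) ω ⊆ E := fun ω hω ω' h =>
    ⟨fun j hj hjn => (h j hjn).symm ▸ hω.1 j hj hjn, (h _ le_rfl).trans hω.2⟩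
  rw [hE, M.measure_inter_coord_succ_eq_mul hEn (fun ω hω => hω.2)]
  by_cases hb : b ∈ Q
  · have : E = staysIn Q n ∩ {ω | ω (n + 1) = b} := by
      ext ω
      simp only [E, staysIn, mem_inter_iff, mem_ofPred_eq]
      constructor
      · exact fun h => ⟨fun j hj hjn => h.1 j hj (by omega), h.2⟩
      · refine fun h => ⟨fun j hj hjn => ?_, h.2⟩
        rcases Nat.of_le_succ hjn with hjn | rfl
        exacts [h.1 j hj hjn, h.2 ▸ hb]
    simp [this, hb, tabooProb]
  · have : E = ∅ := eq_empty_of_forall_notMem fun ω hω => hb (hω.2 ▸ hω.1 _ n.succ_pos le_rfl)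
    simp [this, hb]

theorem tabooGreen_eq_add_tsum (Q : Set S) (w c : S) :
    M.tabooGreen Q w c = M.p w c + ∑' b : Q, M.tabooGreen Q w b * M.p b c := by
  rw [tabooGreen, tsum_eq_zero_add' ENNReal.summable, tabooProb_zero]
  simp_rw [tabooProb_succ, tabooGreen, ← ENNReal.tsum_mul_right]
  rw [ENNReal.tsum_comm]

/-- Cutting a path from `w` to `c` inside `J` at its first visit to `z`. -/
theorem tabooProb_succ_eq_add_sum {J : Set S} {z : S} (hz : z ∈ J) (w : S) (n : ℕ) (c : S) :
    M.tabooProb J (n + 1) w c = M.tabooProb (J \ {z}) (n + 1) w c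
      + ∑ ij ∈ antidiagonal n, M.tabooProb (J \ {z}) ij.1 w z * M.tabooProb J ij.2 z c := by
  induction n generalizing c with
  | zero =>
    rw [tabooProb_succ, tabooProb_succ,
      ENNReal.tsum_subtype_eq_tsum_diff_singleton_add hz fun b => M.tabooProb J 0 w b * M.p b c]
    simp [tabooProb_zero]
  | succ n ih =>
    calc M.tabooProb J (n + 1 + 1) w c
        = ∑' b : J, (M.tabooProb (J \ {z}) (n + 1) w b
            + ∑ ij ∈ antidiagonal n,
              M.tabooProb (J \ {z}) ij.1 w z * M.tabooProb J ij.2 z b) * M.p b c := by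
          simp_rw [tabooProb_succ M J (n + 1), ih]
      _ = (∑' b : ↥(J \ {z}), M.tabooProb (J \ {z}) (n + 1) w b * M.p b c
            + M.tabooProb (J \ {z}) (n + 1) w z * M.p z c)
          + ∑ ij ∈ antidiagonal n,
              M.tabooProb (J \ {z}) ij.1 w z * ∑' b : J, M.tabooProb J ij.2 z b * M.p b c := by
          rw [← ENNReal.tsum_subtype_eq_tsum_diff_singleton_add hz
            fun b => M.tabooProb (J \ {z}) (n + 1) w b * M.p b c]
          simp_rw [add_mul, ENNReal.tsum_add, Finset.sum_mul, mul_assoc, ← ENNReal.tsum_mul_left]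
          rw [Summable.tsum_finsetSum fun _ _ => ENNReal.summable]
      _ = M.tabooProb (J \ {z}) (n + 1 + 1) w c
          + ∑ ij ∈ antidiagonal (n + 1),
              M.tabooProb (J \ {z}) ij.1 w z * M.tabooProb J ij.2 z c := by
          simp_rw [← tabooProb_succ]
          rw [Finset.Nat.sum_antidiagonal_succ', tabooProb_zero M J, add_assoc]

theorem tabooGreen_eq_mul_one_add {J : Set S} {z : S} (hz : z ∈ J) (w : S) :
    M.tabooGreen J w z = M.tabooGreen (J \ {z}) w z * (1 + M.tabooGreen J z z) :=
  ENNReal.tsum_eq_mul_one_add_of_renewal (by simp [tabooProb_zero])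
    (M.tabooProb_succ_eq_add_sum hz w · z)

theorem tabooGreen_ne_top {J : Set S} {z : S} (hz : z ∈ J)
    (h : M.tabooGreen (J \ {z}) z z < 1) : M.tabooGreen J z z ≠ ⊤ :=
  ENNReal.tsum_ne_top_of_renewal (by simp [tabooProb_zero]) (M.tabooProb_succ_eq_add_sum hz z · z) h

lemma measurableSet_staysIn_inter (Q T : Set S) (n : ℕ) :
    MeasurableSet (staysIn Q n ∩ {ω | ω (n + 1) ∈ T}) := by
  refine MeasurableSet.inter ?_ (measurable_pi_apply (n + 1) .of_discrete)
  simp only [staysIn, ofPred_forall]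
  exact .iInter fun j => .iInter fun _ => .iInter fun _ => measurable_pi_apply j .of_discrete

lemma measure_iUnion_staysIn_inter {Q T : Set S} (hQT : Disjoint Q T) (w : S) :
    M.P w (⋃ n, staysIn Q n ∩ {ω | ω (n + 1) ∈ T})
      = ∑' n, M.P w (staysIn Q n ∩ {ω | ω (n + 1) ∈ T}) := by
  refine measure_iUnion ((pairwise_disjoint_on _).2 fun m n hmn => ?_)
    fun n => measurableSet_staysIn_inter Q T n
  exact disjoint_left.2 fun ω hm hn => hQT.ne_of_mem (hn.1 (m + 1) m.succ_pos hmn) hm.2 rfl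

theorem measure_hitAtP {A : Set S} {y : S} (hy : y ∈ A) (x : S) :
    M.P x (hitAtP A y) = M.tabooGreen Aᶜ x y := by
  rw [hitAtP_eq_iUnion hy]
  exact M.measure_iUnion_staysIn_inter (T := {y}) (disjoint_singleton_right.2 (not_not.2 hy)) x

theorem measure_tauP_singleton_lt {A : Set S} {z : S} (hz : z ∉ A) (w : S) :
    M.P w {ω | tauP {z} ω < tauP A ω} = M.tabooGreen ({z} ∪ A)ᶜ w z := by
  rw [setOf_tauP_lt_tauP_eq_iUnion, sdiff_eq_left.2 (disjoint_singleton_left.2 hz)]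
  exact M.measure_iUnion_staysIn_inter (disjoint_compl_left_iff_subset.2 subset_union_left) w

theorem measure_tauP_singleton_lt_add_measure_gt (hrec : MCRecurrent M) {A : Set S} {z : S}
    (hz : z ∉ A) :
    M.P z {ω | tauP {z} ω < tauP A ω} + M.P z {ω | tauP A ω < tauP {z} ω} = 1 := by
  have := M.prob z
  have hmeas : MeasurableSet {ω | tauP A ω < tauP {z} ω} := by
    rw [setOf_tauP_lt_tauP_eq_iUnion]
    exact .iUnion fun n => measurableSet_staysIn_inter _ _ n
  have hdisj : Disjoint {ω | tauP {z} ω < tauP A ω} {ω | tauP A ω < tauP {z} ω} :=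
    disjoint_left.2 fun ω (h₁ : tauP {z} ω < tauP A ω) h₂ => lt_asymm h₁ h₂
  rw [← measure_union hdisj hmeas]
  refine le_antisymm prob_le_one ((hrec z).symm.le.trans (measure_mono fun ω hω => ?_))
  obtain ⟨k, hk⟩ := ENat.ne_top_iff_exists.1 hω
  show tauP {z} ω < tauP A ω ∨ tauP A ω < tauP {z} ω
  refine lt_or_gt_of_ne fun h => hz ?_
  obtain ⟨-, hkz, -⟩ := tauP_eq_coe_iff.1 hk.symm
  obtain ⟨-, hkA, -⟩ := tauP_eq_coe_iff.1 (h ▸ hk.symm)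
  exact (mem_singleton_iff.1 hkz) ▸ hkA

theorem tabooGreen_compl_eq_div (hrec : MCRecurrent M) {A : Set S} {z : S} (hz : z ∈ Aᶜ)
    (x : S) : M.tabooGreen Aᶜ x z
      = M.P x {ω | tauP {z} ω < tauP A ω} / M.P z {ω | tauP A ω < tauP {z} ω} := by
  have hI : Aᶜ \ {z} = ({z} ∪ A)ᶜ := by rw [compl_union, inter_comm, sdiff_eq]
  have hrv : M.tabooGreen (Aᶜ \ {z}) z z + M.P z {ω | tauP A ω < tauP {z} ω} = 1 := by
    rw [hI, ← M.measure_tauP_singleton_lt hz]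
    exact M.measure_tauP_singleton_lt_add_measure_gt hrec hz
  rw [M.measure_tauP_singleton_lt hz, ← hI, div_eq_mul_inv, M.tabooGreen_eq_mul_one_add hz x,
    ENNReal.one_add_eq_inv_of_eq_mul hrv (M.tabooGreen_eq_mul_one_add hz z)
      (M.tabooGreen_ne_top hz)]

end MarkovProperty

end MC

theorem statement4_general [Countable S] (M : MC S)
    (hrec : MCRecurrent M) (A : Set S) (x : S) (y : S) (hy : y ∈ A) :
    M.P x (hitAtP A y)
      = M.p x y + ∑' z : ↥Aᶜ,
          (M.P x {ω | tauP {(z : S)} ω < tauP A ω}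
            / M.P (z : S) {ω | tauP A ω < tauP {(z : S)} ω}) * M.p z y := by
  have := M.separatesPoints_of_recurrent hrec
  rw [M.measure_hitAtP hy, M.tabooGreen_eq_add_tsum]
  congr 1
  exact tsum_congr fun z => by rw [M.tabooGreen_compl_eq_div hrec z.2]

/-- For an irreducible recurrent chain, `A ⊂ S`, `x ∈ S`, `y ∈ A`:
`P^x(X_{τ⁺_A} = y) = p(x,y) + Σ_{z ∉ A} [P^x(τ⁺_z < τ⁺_A)/P^z(τ⁺_A < τ⁺_z)] p(z,y)`. -/
theorem statement4 [Countable S] (M : MC S) (hirr : MCIrreducible M)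
    (hrec : MCRecurrent M) (A : Set S) (x : S) (y : S) (hy : y ∈ A) :
    M.P x (hitAtP A y)
      = M.p x y + ∑' z : ↥Aᶜ,
          (M.P x {ω | tauP {(z : S)} ω < tauP A ω}
            / M.P (z : S) {ω | tauP A ω < tauP {(z : S)} ω}) * M.p z y :=
  statement4_general M hrec A x y hy
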